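/- With n = 4 and k = 6 (the 11-dimensional lens space L₄¹¹ = S¹¹/ℤ₄, on which the Spin-ℤ₈ structure doubles the charges of the gravitino and dilatino to 2 and −6): (ηRS(4,6,2) − ηRS(4,6,0)) − 2·(ηD(4,6,2) − ηD(4,6,0)) − (ηD(4,6,−6) − ηD(4,6,0)) = 1/2. (This is the value 1/2 ∈ ℝ/ℤ of the type IIB duality anomaly on L₄¹¹.) -/

import Mathlib

open scoped BigOperators

/-- The Atiyah–Patodi–Singer eta invariant of the charge-`q` Dirac operator on the
lens space `L_n^{2k-1} = S^{2k-1}/ℤ_n`. -/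
noncomputable def etaD (n k : ℕ) (q : ℤ) : ℂ :=
  -(1 / ((n : ℂ) * Complex.I ^ k)) *
    ∑ j ∈ Finset.Icc 1 (n - 1),
      Complex.exp (-(2 * (Real.pi : ℂ) * Complex.I * (q : ℂ) * (j : ℂ)) / (n : ℂ)) /
        (2 * ((Real.sin (Real.pi * (j : ℝ) / (n : ℝ)) : ℝ) : ℂ)) ^ k

/-- The Atiyah–Patodi–Singer eta invariant of the charge-`q` Rarita–Schwinger operator on the
lens space `L_n^{2k-1} = S^{2k-1}/ℤ_n`. -/
noncomputable def etaRS (n k : ℕ) (q : ℤ) : ℂ :=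
  -(1 / ((n : ℂ) * Complex.I ^ k)) *
    ∑ j ∈ Finset.Icc 1 (n - 1),
      Complex.exp (-(2 * (Real.pi : ℂ) * Complex.I * (q : ℂ) * (j : ℂ)) / (n : ℂ)) *
        (2 * (k : ℂ) * ((Real.cos (2 * Real.pi * (j : ℝ) / (n : ℝ)) : ℝ) : ℂ) - 1) /
        (2 * ((Real.sin (Real.pi * (j : ℝ) / (n : ℝ)) : ℝ) : ℂ)) ^ k

/-! On `L₄¹¹` only `j = 1, 2, 3` contribute, with `(2 sin(πj/4))⁶ = 8, 64, 8` and
`cos(πj/2) = 0, -1, 0`, so both eta invariants are cubic polynomials in the phase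
`ω = exp(-πiq/2)` of the charge. The charges `0`, `2` and `-6 ≡ 2 (mod 4)` have `ω = 1, -1, -1`. -/

open Complex

noncomputable def chargePhase (n : ℕ) (q : ℤ) : ℂ :=
  exp (-(2 * (Real.pi : ℂ) * I * (q : ℂ)) / (n : ℂ))

lemma exp_charge_eq_chargePhase_pow (n j : ℕ) (q : ℤ) :
    exp (-(2 * (Real.pi : ℂ) * I * (q : ℂ) * (j : ℂ)) / (n : ℂ)) = chargePhase n q ^ j := by
  rw [chargePhase, ← exp_nat_mul]
  ring_nf

lemma chargePhase_add_mul {n : ℕ} (hn : n ≠ 0) (q m : ℤ) :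
    chargePhase n (q + n * m) = chargePhase n q := by
  have hn' : (n : ℂ) ≠ 0 := Nat.cast_ne_zero.mpr hn
  rw [chargePhase, chargePhase, ← mul_one (exp (-(2 * (Real.pi : ℂ) * I * q) / n)),
    ← exp_int_mul_two_pi_mul_I (-m), ← exp_add]
  congr 1
  push_cast
  field_simp
  ring

theorem etaD_add_mul {n : ℕ} (hn : n ≠ 0) (k : ℕ) (q m : ℤ) :
    etaD n k (q + n * m) = etaD n k q := by
  simp only [etaD, exp_charge_eq_chargePhase_pow, chargePhase_add_mul hn]

lemma chargePhase_zero (n : ℕ) : chargePhase n 0 = 1 := by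
  simp [chargePhase]

lemma chargePhase_four_two : chargePhase 4 2 = -1 := by
  rw [chargePhase, ← exp_pi_mul_I, exp_eq_exp_iff_exists_int]
  exact ⟨-1, by push_cast; ring⟩

lemma two_mul_sin_pi_div_four_pow_six : (2 * Real.sin (Real.pi / 4)) ^ 6 = 8 := by
  have hsq : (2 * Real.sin (Real.pi / 4)) ^ 2 = 2 := by
    rw [Real.sin_pi_div_four, mul_div_cancel₀ _ two_ne_zero, Real.sq_sqrt zero_le_two]
  calc (2 * Real.sin (Real.pi / 4)) ^ 6 = ((2 * Real.sin (Real.pi / 4)) ^ 2) ^ 3 := by ring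
    _ = 8 := by rw [hsq]; norm_num

lemma sum_div_two_mul_sin_pow_six_four (f : ℕ → ℂ) :
    ∑ j ∈ Finset.Icc 1 (4 - 1),
        f j / (2 * ((Real.sin (Real.pi * (j : ℝ) / ((4 : ℕ) : ℝ)) : ℝ) : ℂ)) ^ 6 =
      f 1 / 8 + f 2 / 64 + f 3 / 8 := by
  have h1 : (2 * ((Real.sin (Real.pi * ((1 : ℕ) : ℝ) / ((4 : ℕ) : ℝ)) : ℝ) : ℂ)) ^ 6 = 8 := by
    rw [show Real.pi * ((1 : ℕ) : ℝ) / ((4 : ℕ) : ℝ) = Real.pi / 4 by push_cast; ring]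
    exact_mod_cast two_mul_sin_pi_div_four_pow_six
  have h2 : Real.sin (Real.pi * ((2 : ℕ) : ℝ) / ((4 : ℕ) : ℝ)) = 1 := by
    rw [show Real.pi * ((2 : ℕ) : ℝ) / ((4 : ℕ) : ℝ) = Real.pi / 2 by push_cast; ring,
      Real.sin_pi_div_two]
  have h3 : Real.sin (Real.pi * ((3 : ℕ) : ℝ) / ((4 : ℕ) : ℝ)) =
      Real.sin (Real.pi * ((1 : ℕ) : ℝ) / ((4 : ℕ) : ℝ)) := by
    rw [← Real.sin_pi_sub]
    congr 1
    push_cast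
    ring
  rw [show Finset.Icc 1 (4 - 1) = {1, 2, 3} by decide, Finset.sum_insert (by decide),
    Finset.sum_insert (by decide), Finset.sum_singleton, h2, h3, ← add_assoc, h1]
  norm_num

lemma Complex.I_pow_six : I ^ 6 = -1 := by
  rw [show 6 = 4 + 2 by rfl, pow_add, I_pow_four, I_sq, one_mul]

theorem etaD_four_six (q : ℤ) :
    etaD 4 6 q = (8 * chargePhase 4 q + chargePhase 4 q ^ 2 + 8 * chargePhase 4 q ^ 3) / 256 := by
  rw [etaD, sum_div_two_mul_sin_pow_six_four]
  simp only [exp_charge_eq_chargePhase_pow, I_pow_six]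
  ring

theorem etaRS_four_six (q : ℤ) :
    etaRS 4 6 q =
      -(8 * chargePhase 4 q + 13 * chargePhase 4 q ^ 2 + 8 * chargePhase 4 q ^ 3) / 256 := by
  have hcos1 : Real.cos (2 * Real.pi * ((1 : ℕ) : ℝ) / ((4 : ℕ) : ℝ)) = 0 := by
    rw [show 2 * Real.pi * ((1 : ℕ) : ℝ) / ((4 : ℕ) : ℝ) = Real.pi / 2 by push_cast; ring,
      Real.cos_pi_div_two]
  have hcos2 : Real.cos (2 * Real.pi * ((2 : ℕ) : ℝ) / ((4 : ℕ) : ℝ)) = -1 := by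
    rw [show 2 * Real.pi * ((2 : ℕ) : ℝ) / ((4 : ℕ) : ℝ) = Real.pi by push_cast; ring,
      Real.cos_pi]
  have hcos3 : Real.cos (2 * Real.pi * ((3 : ℕ) : ℝ) / ((4 : ℕ) : ℝ)) = 0 := by
    rw [show 2 * Real.pi * ((3 : ℕ) : ℝ) / ((4 : ℕ) : ℝ) = Real.pi / 2 + Real.pi by push_cast; ring,
      Real.cos_add_pi, Real.cos_pi_div_two, neg_zero]
  rw [etaRS, sum_div_two_mul_sin_pow_six_four]
  simp only [exp_charge_eq_chargePhase_pow, I_pow_six, hcos1, hcos2, hcos3]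
  push_cast
  ring

/-- The type IIB duality anomaly on the 11-dimensional lens space `L₄¹¹ = S¹¹/ℤ₄`
(with gravitino and dilatino charges doubled to `2` and `-6` by the Spin-ℤ₈ structure)
equals `1/2`. -/
theorem anomaly_L4_11 :
    (etaRS 4 6 2 - etaRS 4 6 0) - 2 * (etaD 4 6 2 - etaD 4 6 0)
      - (etaD 4 6 (-6) - etaD 4 6 0) = 1 / 2 := by
  have hcharge : etaD 4 6 (-6) = etaD 4 6 2 := by
    simpa using etaD_add_mul (by norm_num : (4 : ℕ) ≠ 0) 6 2 (-2)
  rw [hcharge, etaRS_four_six, etaRS_four_six, etaD_four_six, etaD_four_six, chargePhase_four_two,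
    chargePhase_zero]
  norm_num
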